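/- Correctness of set-automaton evaluation: for every closed term t, eval_M(s₀, ε) = {ℓ@p : ℓ ∈ L, p ∈ D(t), ℓ matches t at p}, where eval_M(s,p) = {ℓ@p.q : ℓ@q ∈ out(s, hd(t[p.L(s)]))} ∪ ⋃_{(s',p.p') ∈ suc(s,p)} eval_M(s',p.p'). -/

import Mathlib

/-- A position is a finite list of positive natural numbers. -/
abbrev Pos : Type := List ℕ+

/-- `below p q` (written `p ≤ q` in the paper) holds iff `q` is a prefix of `p`. -/
def below (p q : Pos) : Prop := ∃ q'' : Pos, p = q ++ q''

/-- Terms over a signature `F`, with a single variable `ω` (patterns are linear). -/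
inductive Tm (F : Type) : Type
  | var : Tm F
  | app : F → List (Tm F) → Tm F

variable {F : Type}

/-- Head symbol of a term (none for the variable). -/
def hd : Tm F → Option F
  | .var => none
  | .app f _ => some f

/-- The subterm of `t` at position `p`, if `p` is in the domain of `t`. -/
def subtermAt : Tm F → Pos → Option (Tm F)
  | t, [] => some t
  | .var, _ :: _ => none
  | .app _ ts, i :: p => (ts[(i : ℕ) - 1]?).bind (fun u => subtermAt u p)

/-- The domain (set of positions) of a term. -/
def Dom (t : Tm F) : Set Pos := {p | (subtermAt t p).isSome}

/-- `t` is a closed term: it contains no variable. -/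
def Closed (t : Tm F) : Prop := ∀ p u, subtermAt t p = some u → u ≠ Tm.var

/-- Terms that respect the arity function of the signature. -/
inductive WF (ar : F → ℕ) : Tm F → Prop
  | var : WF ar Tm.var
  | app : ∀ f ts, ts.length = ar f → (∀ u ∈ ts, WF ar u) → WF ar (Tm.app f ts)

/-- Pattern `ℓ` matches term `t` at position `p`: for every non-variable
position `p'` of `ℓ`, the head symbols of `t[p.p']` and `ℓ[p']` agree. -/
def Matches (ℓ t : Tm F) (p : Pos) : Prop :=
  ∀ p' u, subtermAt ℓ p' = some u → u ≠ Tm.var →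
    ∃ v, subtermAt t (p ++ p') = some v ∧ hd v = hd u

/-- A match obligation: a set of (subpattern, position) pairs. -/
abbrev Obl (F : Type) := Set (Tm F × Pos)
/-- A match goal: a match obligation together with a match announcement. -/
abbrev Goal (F : Type) := Obl F × (Tm F × Pos)
/-- A state of the set automaton: a set of match goals. -/
abbrev St (F : Type) := Set (Goal F)

/-- The positions of a match obligation. -/
def posOf (mo : Obl F) : Set Pos := {p | ∃ u, (u, p) ∈ mo}

/-- All match obligation positions of a state. -/
def posMO (s : St F) : Set Pos := {p | ∃ g ∈ s, p ∈ posOf g.1}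

/-- Reduction of a match obligation after observing a symbol of arity `n`
at position `p`: pairs at other positions are kept, and the pair at `p` is
replaced by obligations for its non-variable arguments. -/
def reduce (mo : Obl F) (n : ℕ) (p : Pos) : Obl F :=
  {x | x ∈ mo ∧ x.2 ≠ p} ∪
  {x | ∃ (ℓ u : Tm F) (i : ℕ+), (ℓ, p) ∈ mo ∧ (i : ℕ) ≤ n ∧
        subtermAt ℓ [i] = some u ∧ u ≠ Tm.var ∧ x = (u, p ++ [i])}

/-- The `f`-derivative of state `s` labelled with position `lab`:
unchanged goals, reduced goals and fresh goals. -/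
def derivS (pats : Set (Tm F)) (ar : F → ℕ) (s : St F) (lab : Pos) (f : F) : St F :=
  {g | g ∈ s ∧ lab ∉ posOf g.1} ∪
  {g | ∃ mo ma, (mo, ma) ∈ s ∧ (∃ ℓ, (ℓ, lab) ∈ mo ∧ hd ℓ = some f) ∧
        reduce mo (ar f) lab ≠ ∅ ∧ g = (reduce mo (ar f) lab, ma)} ∪
  {g | ∃ (ℓ : Tm F) (i : ℕ+), ℓ ∈ pats ∧ (i : ℕ) ≤ ar f ∧
        g = ({(ℓ, lab ++ [i])}, (ℓ, lab ++ [i]))}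

/-- The direct dependency relation: the obligation position sets intersect. -/
def dirDep (g₁ g₂ : Goal F) : Prop := (posOf g₁.1 ∩ posOf g₂.1).Nonempty

/-- `K` is an equivalence class of `X` under the transitive closure of the
direct dependency relation restricted to `X`. -/
def IsClass (X K : St F) : Prop :=
  ∃ g ∈ X, K = {g' | g' ∈ X ∧
    Relation.ReflTransGen (fun a b => a ∈ X ∧ b ∈ X ∧ dirDep a b) g g'}

/-- The match announcement positions of a set of goals. -/
def posMA (K : St F) : Set Pos := {p | ∃ mo ℓ, (mo, (ℓ, p)) ∈ K}

/-- `g` is the greatest common prefix (join) of the set of positions `P`. -/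
def IsGcp (P : Set Pos) (g : Pos) : Prop :=
  (∀ p ∈ P, below p g) ∧ ∀ r : Pos, (∀ p ∈ P, below p r) → below g r

/-- Lift a match goal by stripping the common prefix `g` from all positions. -/
def liftGoal (g : Pos) (x : Goal F) : Goal F :=
  ((fun y : Tm F × Pos => (y.1, y.2.drop g.length)) '' x.1,
   (x.2.1, x.2.2.drop g.length))

/-- Lift a set of match goals. -/
def liftSt (g : Pos) (K : St F) : St F := liftGoal g '' K

/-- The transition function of the set automaton: `(s', p') ∈ delta pats ar L s f`
iff `s'` is the lifting of a dependency class `K` of the derivative and `p'` is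
the greatest common prefix of the announcement positions of `K`. -/
def delta (pats : Set (Tm F)) (ar : F → ℕ) (L : St F → Pos) (s : St F) (f : F) :
    Set (St F × Pos) :=
  {x | ∃ K, IsClass (derivS pats ar s (L s) f) K ∧ IsGcp (posMA K) x.2 ∧
        x.1 = liftSt x.2 K}

/-- The initial state: all fresh root goals. -/
def initSt (pats : Set (Tm F)) : St F :=
  {g | ∃ ℓ ∈ pats, g = ({(ℓ, ([] : Pos))}, (ℓ, ([] : Pos)))}

/-- Reachable states of the set automaton. -/
inductive Reachable (pats : Set (Tm F)) (ar : F → ℕ) (L : St F → Pos) : St F → Prop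
  | init : Reachable pats ar L (initSt pats)
  | step : ∀ s f s' p, Reachable pats ar L s →
      (s', p) ∈ delta pats ar L s f → Reachable pats ar L s'

/-- The labelling function `L` picks, for every reachable state, an obligation
position of one of its root goals. -/
def RootLabel (pats : Set (Tm F)) (ar : F → ℕ) (L : St F → Pos) : Prop :=
  ∀ s, Reachable pats ar L s →
    ∃ mo ℓ, (mo, (ℓ, ([] : Pos))) ∈ s ∧ L s ∈ posOf mo

/-- The nodes of the evaluation tree `ET_M(t)`. -/
inductive Node (pats : Set (Tm F)) (ar : F → ℕ) (L : St F → Pos) (t : Tm F) :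
    St F → Pos → Prop
  | root : Node pats ar L t (initSt pats) []
  | step : ∀ s p f s' p', Node pats ar L t s p →
      (∃ v, subtermAt t (p ++ L s) = some v ∧ hd v = some f) →
      (s', p') ∈ delta pats ar L s f →
      Node pats ar L t s' (p ++ p')

/-- The edges of the evaluation tree `ET_M(t)`. -/
def EdgeRel (pats : Set (Tm F)) (ar : F → ℕ) (L : St F → Pos) (t : Tm F)
    (s : St F) (p : Pos) (s' : St F) (q : Pos) : Prop :=
  Node pats ar L t s p ∧ ∃ f p',
    (∃ v, subtermAt t (p ++ L s) = some v ∧ hd v = some f) ∧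
    (s', p') ∈ delta pats ar L s f ∧ q = p ++ p'

/-- The work set `W(s,p)`: the positions of `t` below the position pointer that
still have to be inspected. -/
def Work (t : Tm F) (s : St F) (p : Pos) : Set Pos :=
  {x | ∃ q, x = p ++ q ∧ x ∈ Dom t ∧ ∃ r ∈ posMO s, below q r}

/-- The output function: match announcements whose obligation is completed by
observing `f` at the label position. -/
def outS (ar : F → ℕ) (L : St F → Pos) (s : St F) (f : F) : Set (Tm F × Pos) :=
  {ma | ({(Tm.app f (List.replicate (ar f) Tm.var), L s)}, ma) ∈ s}

/-!
Every node `(s, p)` of the evaluation tree satisfies three invariants. Each goal `(mo, ℓ@q)`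
of `s` records a history: its obligations are non-variable subpatterns of `ℓ` at positions of
`t` below `p.q`, and `ℓ` matches `t` at `p.q` as soon as they are all fulfilled. The obligation
positions of `s` form an antichain, and each of them carries the fresh goals of all patterns.

Soundness is the history invariant applied to an output goal, whose only obligation
`f(ω,…,ω)` is fulfilled at the inspected position. For completeness, the antichain property
makes the finite work set `W(s, p)` shrink strictly along every edge. By induction on its size,
every obligation position is eventually inspected, and every goal whose obligations are
fulfilled is eventually output, since at each node it is either output or passed on to a child.
Hence every position of `t` carries obligations at
some node, so it carries the fresh goal of every pattern, and the fresh goal of an actual match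
is passed down the tree until it is output.
-/

section Positions

theorem below_iff_isPrefix {p q : Pos} : below p q ↔ q <+: p :=
  ⟨fun ⟨r, h⟩ => ⟨r, h.symm⟩, fun ⟨r, h⟩ => ⟨r, h.symm⟩⟩

theorem below_nil (p : Pos) : below p [] := ⟨p, rfl⟩

theorem exists_isGcp {P : Set Pos} (hP : P.Nonempty) : ∃ g, IsGcp P g := by
  classical
  obtain ⟨p₀, hp₀⟩ := hP
  let common : ℕ → Prop := fun n => ∀ p ∈ P, below p (p₀.take n)
  have hcommon : common (Nat.findGreatest common p₀.length) :=
    Nat.findGreatest_spec (Nat.zero_le _) fun p _ => by simpa using below_nil p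
  refine ⟨_, hcommon, fun r hr => ?_⟩
  have hrp₀ : r <+: p₀ := below_iff_isPrefix.mp (hr p₀ hp₀)
  have hr_eq : p₀.take r.length = r := (List.prefix_iff_eq_take.mp hrp₀).symm
  have hle : r.length ≤ Nat.findGreatest common p₀.length :=
    Nat.le_findGreatest hrp₀.length_le
      (show ∀ p ∈ P, below p (p₀.take r.length) by rwa [hr_eq])
  rw [below_iff_isPrefix, ← hr_eq]
  exact List.take_prefix_take_left hle

end Positions

section Terms

variable {ar : F → ℕ} {t u v c : Tm F} {f : F} {p q r : Pos}

theorem subtermAt_append (t : Tm F) (p q : Pos) :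
    subtermAt t (p ++ q) = (subtermAt t p).bind (subtermAt · q) := by
  induction p generalizing t with
  | nil => simp [subtermAt]
  | cons i p ih =>
    cases t with
    | var => simp [subtermAt]
    | app f ts =>
      simp only [List.cons_append, subtermAt]
      cases ts[(i : ℕ) - 1]? <;> simp [ih]

theorem subtermAt_app_singleton (f : F) (ts : List (Tm F)) (i : ℕ+) :
    subtermAt (Tm.app f ts) [i] = ts[(i : ℕ) - 1]? := by
  simp only [subtermAt]
  cases ts[(i : ℕ) - 1]? <;> simp

theorem mem_dom_of_subtermAt_eq_some (h : subtermAt t p = some u) : p ∈ Dom t := by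
  simp [Dom, h]

theorem mem_dom_of_append_mem_dom (h : p ++ q ∈ Dom t) : p ∈ Dom t := by
  simp only [Dom, Set.mem_ofPred_eq, subtermAt_append] at h ⊢
  cases hp : subtermAt t p <;> simp_all

theorem exists_app_of_hd_eq_some (h : hd v = some f) : ∃ ts, v = Tm.app f ts := by
  cases v with
  | var => simp [hd] at h
  | app g ts => simp only [hd, Option.some.injEq] at h; exact ⟨ts, by rw [h]⟩

theorem Closed.exists_hd (hc : Closed t) (hp : p ∈ Dom t) :
    ∃ v f, subtermAt t p = some v ∧ hd v = some f := by
  obtain ⟨v, hv⟩ := Option.isSome_iff_exists.mp hp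
  cases v with
  | var => exact absurd rfl (hc _ _ hv)
  | app f ts => exact ⟨_, f, hv, rfl⟩

theorem WF.subtermAt (hw : WF ar t) (h : subtermAt t p = some u) : WF ar u := by
  induction p generalizing t with
  | nil => simp only [_root_.subtermAt, Option.some.injEq] at h; exact h ▸ hw
  | cons i p ih =>
    cases hw with
    | var => simp [_root_.subtermAt] at h
    | app f ts _ hts =>
      simp only [_root_.subtermAt] at h
      cases hc : ts[(i : ℕ) - 1]? with
      | none => simp [hc] at h
      | some c =>
        simp only [hc, Option.bind_some] at h
        exact ih (hts c (List.mem_of_getElem? hc)) h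

theorem WF.length_eq (hw : WF ar (Tm.app f ts)) : ts.length = ar f := by
  cases hw; assumption

theorem WF.append_singleton_mem_dom_iff (hw : WF ar t) (hv : _root_.subtermAt t r = some v)
    (hf : hd v = some f) {i : ℕ+} : r ++ [i] ∈ Dom t ↔ (i : ℕ) ≤ ar f := by
  obtain ⟨ts, rfl⟩ := exists_app_of_hd_eq_some hf
  have hlen := (hw.subtermAt hv).length_eq
  have hi := i.pos
  simp [Dom, subtermAt_append, hv, subtermAt_app_singleton]
  omega

end Terms

section Matching

variable {t u v c : Tm F} {f : F} {r r' : Pos}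

theorem Matches.root (hm : Matches u t r) (hu : u ≠ Tm.var) :
    ∃ v, subtermAt t r = some v ∧ hd v = hd u := by
  simpa using hm [] u (by simp [subtermAt]) hu

theorem Matches.mem_dom (hm : Matches u t r) (hu : u ≠ Tm.var) : r ∈ Dom t := by
  obtain ⟨v, hv, -⟩ := hm.root hu
  exact mem_dom_of_subtermAt_eq_some hv

theorem Matches.subtermAt (hm : Matches u t r) (h : subtermAt u r' = some c) :
    Matches c t (r ++ r') := by
  intro p' w hw hwv
  have hsub : _root_.subtermAt u (r' ++ p') = some w := by
    rw [subtermAt_append, h]; simpa using hw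
  simpa using hm _ w hsub hwv

theorem matches_app {args : List (Tm F)} (hv : subtermAt t r = some v) (hf : hd v = some f)
    (hargs : ∀ (i : ℕ+) c, args[(i : ℕ) - 1]? = some c → c ≠ Tm.var →
      Matches c t (r ++ [i])) :
    Matches (Tm.app f args) t r := by
  rintro (_ | ⟨i, rest⟩) w hw hwv
  · simp only [subtermAt, Option.some.injEq] at hw
    exact ⟨v, by simpa using hv, by rw [hf, ← hw]; rfl⟩
  · simp only [subtermAt] at hw
    cases hc : args[(i : ℕ) - 1]? with
    | none => simp [hc] at hw
    | some c =>
      simp only [hc, Option.bind_some] at hw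
      have hcv : c ≠ Tm.var := by
        rintro rfl
        cases rest <;> simp_all [subtermAt]
      simpa using hargs i c hc hcv rest w hw hwv

theorem finite_dom (t : Tm F) : (Dom t).Finite := by
  induction t using Tm.rec (motive_2 := fun ts => ∀ u ∈ ts, (Dom u).Finite) with
  | var =>
    refine (Set.finite_singleton []).subset fun p hp => ?_
    cases p with
    | nil => rfl
    | cons i q => simp [Dom, subtermAt] at hp
  | app f ts ih =>
    have hsub : Dom (Tm.app f ts) ⊆ insert [] (⋃ u ∈ {u | u ∈ ts},
        Set.image2 List.cons {i : ℕ+ | (i : ℕ) ≤ ts.length} (Dom u)) := by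
      rintro (_ | ⟨i, q⟩) hp
      · exact Set.mem_insert _ _
      · simp only [Dom, Set.mem_ofPred_eq, subtermAt] at hp
        cases hu : ts[(i : ℕ) - 1]? with
        | none => simp [hu] at hp
        | some u =>
          simp only [hu, Option.bind_some] at hp
          have hi := (List.getElem?_eq_some_iff.mp hu).1
          refine Or.inr (Set.mem_biUnion (List.mem_of_getElem? hu) ⟨i, ?_, q, hp, rfl⟩)
          simp only [Set.mem_ofPred_eq]
          omega
    refine (Set.Finite.insert _ ((List.finite_toSet ts).biUnion fun u hu => ?_)).subset hsub
    exact ((Set.finite_le_nat _).preimage PNat.coe_injective.injOn).image2 _ (ih u hu)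
  | nil u hu => exact absurd hu List.not_mem_nil
  | cons u us hu hus w hw =>
    rcases List.mem_cons.mp hw with rfl | hw
    exacts [hu, hus w hw]

end Matching

section Goals

variable {pats : Set (Tm F)} {ar : F → ℕ} {t u u₀ v : Tm F} {f : F} {ℓ : Tm F}
  {p q lab ρ g₀ : Pos} {mo : Obl F} {ma : Tm F × Pos} {g : Goal F} {s : St F}

abbrev freshGoal (ℓ : Tm F) (ρ : Pos) : Goal F := ({(ℓ, ρ)}, (ℓ, ρ))

def HasFreshGoals (pats : Set (Tm F)) (s : St F) : Prop :=
  ∀ ρ ∈ posMO s, ∀ ℓ ∈ pats, freshGoal ℓ ρ ∈ s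

def Fulfilled (t : Tm F) (p : Pos) (mo : Obl F) : Prop :=
  ∀ x ∈ mo, Matches x.1 t (p ++ x.2)

theorem Fulfilled.reduce (h : Fulfilled t p mo) (n : ℕ) (lab : Pos) :
    Fulfilled t p (reduce mo n lab) := by
  rintro x (⟨hx, -⟩ | ⟨ℓ, u, i, hℓ, -, hu, -, rfl⟩)
  · exact h x hx
  · simpa using (h _ hℓ).subtermAt hu

theorem append_drop_of_prefix {g₀ r : Pos} (h : g₀ <+: r) : g₀ ++ r.drop g₀.length = r :=
  List.prefix_iff_eq_append.mp h

theorem fulfilled_liftGoal_iff (hpre : ∀ x ∈ g.1, g₀ <+: x.2) :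
    Fulfilled t (p ++ g₀) (liftGoal g₀ g).1 ↔ Fulfilled t p g.1 := by
  constructor
  · intro h x hx
    simpa [append_drop_of_prefix (hpre x hx)] using h _ ⟨x, hx, rfl⟩
  · rintro h _ ⟨x, hx, rfl⟩
    simpa [append_drop_of_prefix (hpre x hx)] using h x hx

theorem liftGoal_freshGoal :
    liftGoal g₀ (freshGoal ℓ ρ) = freshGoal ℓ (ρ.drop g₀.length) := by
  simp [liftGoal, Set.image_singleton]

theorem posOf_singleton : posOf ({(u, ρ)} : Obl F) = {ρ} := by
  ext r; simp [posOf]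

theorem posMO_initSt_subset : posMO (initSt pats) ⊆ {[]} := by
  rintro r ⟨_, ⟨ℓ, -, rfl⟩, u, hu⟩
  exact congrArg Prod.snd hu

structure HistoryInv (pats : Set (Tm F)) (t : Tm F) (p : Pos) (g : Goal F) : Prop where
  pattern_mem : g.2.1 ∈ pats
  ne_var : ∀ x ∈ g.1, x.1 ≠ Tm.var
  subpattern : ∀ x ∈ g.1, ∃ r, x.2 = g.2.2 ++ r ∧ subtermAt g.2.1 r = some x.1
  mem_dom : ∀ x ∈ g.1, p ++ x.2 ∈ Dom t
  matches_of_fulfilled : Fulfilled t p g.1 → Matches g.2.1 t (p ++ g.2.2)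

namespace HistoryInv

theorem eq_of_mem (h : HistoryInv pats t p g) (hu : (u, q) ∈ g.1) (hv : (v, q) ∈ g.1) :
    u = v := by
  obtain ⟨w, hw, hsw⟩ := h.subpattern _ hu
  obtain ⟨w', hw', hsw'⟩ := h.subpattern _ hv
  obtain rfl : w = w' := List.append_cancel_left (hw.symm.trans hw')
  exact Option.some.inj (hsw.symm.trans hsw')

theorem wf_of_mem (h : HistoryInv pats t p g) (hWF : ∀ ℓ ∈ pats, WF ar ℓ) {x : Tm F × Pos}
    (hx : x ∈ g.1) : WF ar x.1 := by
  obtain ⟨w, -, hsw⟩ := h.subpattern x hx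
  exact (hWF _ h.pattern_mem).subtermAt hsw

theorem prefix_of_mem (h : HistoryInv pats t p g) (hq : g₀ <+: g.2.2) {x : Tm F × Pos}
    (hx : x ∈ g.1) : g₀ <+: x.2 := by
  obtain ⟨w, hw, -⟩ := h.subpattern x hx
  exact hw ▸ hq.trans (List.prefix_append _ _)

theorem liftGoal (h : HistoryInv pats t p g) (hq : g₀ <+: g.2.2) :
    HistoryInv pats t (p ++ g₀) (liftGoal g₀ g) where
  pattern_mem := h.pattern_mem
  ne_var := by
    rintro _ ⟨x, hx, rfl⟩
    exact h.ne_var x hx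
  subpattern := by
    rintro _ ⟨x, hx, rfl⟩
    obtain ⟨w, hw, hsw⟩ := h.subpattern x hx
    refine ⟨w, ?_, hsw⟩
    simp only [_root_.liftGoal, hw]
    exact List.drop_append_of_le_length hq.length_le
  mem_dom := by
    rintro _ ⟨x, hx, rfl⟩
    simpa [append_drop_of_prefix (h.prefix_of_mem hq hx)] using h.mem_dom x hx
  matches_of_fulfilled hful := by
    simpa [_root_.liftGoal, append_drop_of_prefix hq] using
      h.matches_of_fulfilled ((fulfilled_liftGoal_iff fun _ => h.prefix_of_mem hq).mp hful)

theorem eq_singleton_of_reduce_eq_empty (h : HistoryInv pats t p (mo, ma))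
    (hWF : ∀ ℓ ∈ pats, WF ar ℓ) (hu₀ : (u₀, lab) ∈ mo) (hu₀f : hd u₀ = some f)
    (hred : reduce mo (ar f) lab = ∅) :
    mo = {(Tm.app f (List.replicate (ar f) Tm.var), lab)} := by
  have hnot : ∀ x, x ∉ reduce mo (ar f) lab := Set.eq_empty_iff_forall_notMem.mp hred
  obtain ⟨args, rfl⟩ := exists_app_of_hd_eq_some hu₀f
  have hlen : args.length = ar f := (h.wf_of_mem hWF hu₀).length_eq
  have hargs : args = List.replicate (ar f) Tm.var := by
    refine List.eq_replicate_iff.mpr ⟨hlen, fun c hc => by_contra fun hcv => ?_⟩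
    obtain ⟨k, hk, rfl⟩ := List.getElem_of_mem hc
    refine hnot (args[k], lab ++ [k.succPNat])
      (Or.inr ⟨_, args[k], _, hu₀, by simp; omega, ?_, hcv, rfl⟩)
    simp [subtermAt_app_singleton, hk]
  subst hargs
  ext ⟨u, r⟩
  refine ⟨fun hx => ?_, fun hx => (Set.mem_singleton_iff.mp hx) ▸ hu₀⟩
  obtain rfl : r = lab := by_contra fun hne => hnot _ (Or.inl ⟨hx, hne⟩)
  rw [h.eq_of_mem hx hu₀]
  rfl

end HistoryInv

theorem historyInv_freshGoal (hℓ : ℓ ∈ pats) (hℓv : ℓ ≠ Tm.var)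
    (hdom : p ++ ρ ∈ Dom t) :
    HistoryInv pats t p (freshGoal ℓ ρ) where
  pattern_mem := hℓ
  ne_var := by rintro _ rfl; exact hℓv
  subpattern := by rintro _ rfl; exact ⟨[], by simp, by simp [subtermAt]⟩
  mem_dom := by rintro _ rfl; exact hdom
  matches_of_fulfilled h := h _ rfl

end Goals

section Derivative

variable {pats : Set (Tm F)} {ar : F → ℕ} {t u₀ v : Tm F} {f : F}
  {p lab r g₀ : Pos} {mo : Obl F} {ma : Tm F × Pos} {s X K : St F}

theorem HistoryInv.reduce (h : HistoryInv pats t p (mo, ma)) (hw : WF ar t)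
    (hWF : ∀ ℓ ∈ pats, WF ar ℓ) (hv : subtermAt t (p ++ lab) = some v) (hf : hd v = some f)
    (hu₀ : (u₀, lab) ∈ mo) (hu₀f : hd u₀ = some f) :
    HistoryInv pats t p (_root_.reduce mo (ar f) lab, ma) where
  pattern_mem := h.pattern_mem
  ne_var := by
    rintro x (⟨hx, -⟩ | ⟨-, u, -, -, -, -, hu, rfl⟩)
    exacts [h.ne_var x hx, hu]
  subpattern := by
    rintro x (⟨hx, -⟩ | ⟨ℓ', u, i, hℓ', -, hsub, -, rfl⟩)
    · exact h.subpattern x hx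
    · obtain ⟨w, hw', hsw⟩ := h.subpattern _ hℓ'
      refine ⟨w ++ [i], by simp only at hw'; simp [hw'], ?_⟩
      rw [subtermAt_append, hsw]
      exact hsub
  mem_dom := by
    rintro x (⟨hx, -⟩ | ⟨-, -, i, -, hi, -, -, rfl⟩)
    · exact h.mem_dom x hx
    · simpa using (hw.append_singleton_mem_dom_iff hv hf).mpr hi
  matches_of_fulfilled hred := h.matches_of_fulfilled fun x hx => by
    by_cases hxlab : x.2 = lab
    -- the only obligation at `lab` is `u₀ = f(args)`, whose non-variable arguments are
    -- exactly the new obligations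
    · obtain ⟨u, r⟩ := x
      simp only at hxlab
      rw [hxlab] at hx ⊢
      obtain rfl := h.eq_of_mem hx hu₀
      obtain ⟨args, rfl⟩ := exists_app_of_hd_eq_some hu₀f
      have hlen : args.length = ar f := (h.wf_of_mem hWF hx).length_eq
      refine matches_app hv hf fun i c hc hcv => ?_
      have hi : (i : ℕ) ≤ ar f := by
        have := (List.getElem?_eq_some_iff.mp hc).1
        omega
      simpa using hred (c, lab ++ [i])
        (Or.inr ⟨_, c, i, hx, hi, by rw [subtermAt_app_singleton]; exact hc, hcv, rfl⟩)
    · exact hred x (Or.inl ⟨hx, hxlab⟩)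

theorem historyInv_derivS (hw : WF ar t) (hWF : ∀ ℓ ∈ pats, WF ar ℓ)
    (hpv : ∀ ℓ ∈ pats, ℓ ≠ Tm.var) (hs : ∀ g ∈ s, HistoryInv pats t p g)
    (hv : subtermAt t (p ++ lab) = some v) (hf : hd v = some f) :
    ∀ g ∈ derivS pats ar s lab f, HistoryInv pats t p g := by
  rintro g ((⟨hg, -⟩ | ⟨mo, ma, hg, ⟨u₀, hu₀, hu₀f⟩, -, rfl⟩) |
    ⟨ℓ, i, hℓ, hi, rfl⟩)
  · exact hs g hg
  · exact (hs _ hg).reduce hw hWF hv hf hu₀ hu₀f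
  · exact historyInv_freshGoal hℓ (hpv ℓ hℓ)
      (by simpa using (hw.append_singleton_mem_dom_iff hv hf).mpr hi)

theorem posMO_derivS (hr : r ∈ posMO (derivS pats ar s lab f)) :
    (r ∈ posMO s ∧ r ≠ lab) ∨ ∃ i : ℕ+, (i : ℕ) ≤ ar f ∧ r = lab ++ [i] := by
  obtain ⟨g, hg, u, hu⟩ := hr
  rcases hg with (⟨hg, hlab⟩ | ⟨mo, ma, hg, -, -, rfl⟩) | ⟨ℓ, i, -, hi, rfl⟩
  · exact Or.inl ⟨⟨g, hg, u, hu⟩, fun h => hlab (h ▸ ⟨u, hu⟩)⟩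
  · rcases hu with ⟨hu, hne⟩ | ⟨_, _, i, -, hi, -, -, hx⟩
    · exact Or.inl ⟨⟨_, hg, u, hu⟩, hne⟩
    · exact Or.inr ⟨i, hi, congrArg Prod.snd hx⟩
  · exact Or.inr ⟨i, hi, congrArg Prod.snd hu⟩

theorem isAntichain_posMO_derivS (hAC : IsAntichain (· <+: ·) (posMO s))
    (hlab : lab ∈ posMO s) : IsAntichain (· <+: ·) (posMO (derivS pats ar s lab f)) := by
  intro r₁ h₁ r₂ h₂ hne hpre
  rcases posMO_derivS h₁ with ⟨h₁, hne₁⟩ | ⟨i, -, rfl⟩ <;>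
    rcases posMO_derivS h₂ with ⟨h₂, hne₂⟩ | ⟨j, -, rfl⟩
  · exact hAC h₁ h₂ hne hpre
  · rcases List.prefix_concat_iff.mp hpre with rfl | hpre
    · exact hne₁ (hAC.eq hlab h₁ (List.prefix_append _ _)).symm
    · exact hne₁ (hAC.eq h₁ hlab hpre)
  · exact hne₂ (hAC.eq hlab h₂ ((List.prefix_append _ _).trans hpre)).symm
  · exact hne (hpre.eq_of_length (by simp))

theorem HasFreshGoals.derivS (h : HasFreshGoals pats s) :
    HasFreshGoals pats (derivS pats ar s lab f) := by
  intro ρ hρ ℓ hℓ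
  rcases posMO_derivS hρ with ⟨hρ, hne⟩ | ⟨i, hi, rfl⟩
  · exact Or.inl (Or.inl ⟨h ρ hρ ℓ hℓ, by simpa [posOf_singleton] using hne.symm⟩)
  · exact Or.inr ⟨ℓ, i, hℓ, hi, rfl⟩

end Derivative

section Classes

variable {pats : Set (Tm F)} {t : Tm F} {p g₀ r : Pos} {g g' : Goal F} {X K : St F}

theorem posMO_mono {s s' : St F} (h : s ⊆ s') : posMO s ⊆ posMO s' := by
  rintro r ⟨g, hg, hr⟩
  exact ⟨g, h hg, hr⟩

theorem IsClass.subset (h : IsClass X K) : K ⊆ X := by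
  obtain ⟨g₀, -, rfl⟩ := h
  exact fun g hg => hg.1

theorem IsClass.mem_of_dirDep (h : IsClass X K) (hg : g ∈ K) (hg' : g' ∈ X)
    (hdep : dirDep g g') : g' ∈ K := by
  obtain ⟨g₀, -, rfl⟩ := h
  exact ⟨hg', hg.2.tail ⟨hg.1, hg', hdep⟩⟩

theorem HasFreshGoals.of_isClass (h : HasFreshGoals pats X) (hK : IsClass X K) :
    HasFreshGoals pats K := by
  rintro ρ ⟨g, hg, u, hu⟩ ℓ hℓ
  exact hK.mem_of_dirDep hg (h ρ ⟨g, hK.subset hg, u, hu⟩ ℓ hℓ)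
    ⟨ρ, ⟨u, hu⟩, by simp [posOf_singleton]⟩

theorem IsGcp.prefix_of_mem (hgcp : IsGcp (posMA K) g₀) (hg : g ∈ K) : g₀ <+: g.2.2 :=
  below_iff_isPrefix.mp (hgcp.1 _ ⟨g.1, g.2.1, hg⟩)

theorem append_mem_posMO_of_mem_posMO_liftSt (hK : ∀ g ∈ K, HistoryInv pats t p g)
    (hgcp : IsGcp (posMA K) g₀) (hr : r ∈ posMO (liftSt g₀ K)) : g₀ ++ r ∈ posMO K := by
  obtain ⟨_, ⟨g, hg, rfl⟩, u, ⟨x, hx, hxeq⟩⟩ := hr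
  obtain ⟨rfl, rfl⟩ := Prod.mk.inj hxeq
  refine ⟨g, hg, x.1, ?_⟩
  rw [append_drop_of_prefix ((hK g hg).prefix_of_mem (hgcp.prefix_of_mem hg) hx)]
  exact hx

theorem IsAntichain.posMO_liftSt (hK : ∀ g ∈ K, HistoryInv pats t p g)
    (hgcp : IsGcp (posMA K) g₀) (hAC : IsAntichain (· <+: ·) (posMO K)) :
    IsAntichain (· <+: ·) (posMO (liftSt g₀ K)) := fun r₁ h₁ r₂ h₂ hne hpre =>
  hAC (append_mem_posMO_of_mem_posMO_liftSt hK hgcp h₁)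
    (append_mem_posMO_of_mem_posMO_liftSt hK hgcp h₂) (by simpa using hne)
    ((List.prefix_append_right_inj g₀).mpr hpre)

theorem HasFreshGoals.liftSt (hK : ∀ g ∈ K, HistoryInv pats t p g)
    (hgcp : IsGcp (posMA K) g₀) (h : HasFreshGoals pats K) :
    HasFreshGoals pats (liftSt g₀ K) := by
  intro ρ hρ ℓ hℓ
  have hmem := h _ (append_mem_posMO_of_mem_posMO_liftSt hK hgcp hρ) ℓ hℓ
  have := Set.mem_image_of_mem (liftGoal g₀) hmem
  rwa [liftGoal_freshGoal, List.drop_left] at this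

end Classes

section Nodes

variable {pats : Set (Tm F)} {ar : F → ℕ} {L : St F → Pos} {t v : Tm F} {f : F}
  {p q ρ g₀ : Pos} {mo : Obl F} {ℓ : Tm F} {g : Goal F} {s s' K : St F}

structure NodeInv (pats : Set (Tm F)) (t : Tm F) (s : St F) (p : Pos) : Prop where
  history : ∀ g ∈ s, HistoryInv pats t p g
  antichain : IsAntichain (· <+: ·) (posMO s)
  fresh : HasFreshGoals pats s

theorem NodeInv.pats_nonempty (h : NodeInv pats t s p) (hρ : ρ ∈ posMO s) : pats.Nonempty := by
  obtain ⟨g, hg, -⟩ := hρ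
  exact ⟨_, (h.history g hg).pattern_mem⟩

theorem nodeInv_initSt (hpv : ∀ ℓ ∈ pats, ℓ ≠ Tm.var) :
    NodeInv pats t (initSt pats) [] where
  history := by
    rintro _ ⟨ℓ, hℓ, rfl⟩
    exact historyInv_freshGoal hℓ (hpv ℓ hℓ) rfl
  antichain := (Set.subsingleton_singleton.anti posMO_initSt_subset).isAntichain _
  fresh := by
    intro ρ hρ ℓ hℓ
    obtain rfl : ρ = [] := posMO_initSt_subset hρ
    exact ⟨ℓ, hℓ, rfl⟩

theorem NodeInv.delta (h : NodeInv pats t s p) (hw : WF ar t) (hWF : ∀ ℓ ∈ pats, WF ar ℓ)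
    (hpv : ∀ ℓ ∈ pats, ℓ ≠ Tm.var) (hlab : L s ∈ posMO s)
    (hv : subtermAt t (p ++ L s) = some v) (hf : hd v = some f)
    (hδ : (s', g₀) ∈ delta pats ar L s f) : NodeInv pats t s' (p ++ g₀) := by
  obtain ⟨K, hK, hgcp, hs'⟩ := hδ
  simp only at hgcp hs'
  subst hs'
  have hKh : ∀ g ∈ K, HistoryInv pats t p g := fun g hg =>
    historyInv_derivS hw hWF hpv h.history hv hf g (hK.subset hg)
  refine ⟨?_, ?_, (h.fresh.derivS.of_isClass hK).liftSt hKh hgcp⟩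
  · rintro _ ⟨g, hg, rfl⟩
    exact (hKh g hg).liftGoal (hgcp.prefix_of_mem hg)
  · exact ((isAntichain_posMO_derivS h.antichain hlab).subset
      (posMO_mono hK.subset)).posMO_liftSt hKh hgcp

theorem Node.reachable (h : Node pats ar L t s p) : Reachable pats ar L s := by
  induction h with
  | root => exact .init
  | step s p f s' p' _ _ hδ ih => exact .step s f s' p' ih hδ

theorem RootLabel.label_mem_posMO (hL : RootLabel pats ar L) (hs : Reachable pats ar L s) :
    L s ∈ posMO s := by
  obtain ⟨mo, ℓ, hg, hlab⟩ := hL s hs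
  exact ⟨_, hg, hlab⟩

theorem Node.nodeInv (h : Node pats ar L t s p) (hw : WF ar t) (hWF : ∀ ℓ ∈ pats, WF ar ℓ)
    (hpv : ∀ ℓ ∈ pats, ℓ ≠ Tm.var) (hL : RootLabel pats ar L) : NodeInv pats t s p := by
  induction h with
  | root => exact nodeInv_initSt hpv
  | step s p f s' p' hn hv hδ ih =>
    obtain ⟨v, hv, hf⟩ := hv
    exact ih.delta hw hWF hpv (hL.label_mem_posMO hn.reachable) hv hf hδ

theorem Node.exists_label_symbol (h : Node pats ar L t s p) (hc : Closed t) (hw : WF ar t)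
    (hWF : ∀ ℓ ∈ pats, WF ar ℓ) (hpv : ∀ ℓ ∈ pats, ℓ ≠ Tm.var)
    (hL : RootLabel pats ar L) :
    ∃ v f, subtermAt t (p ++ L s) = some v ∧ hd v = some f := by
  obtain ⟨g, hg, u, hu⟩ := hL.label_mem_posMO h.reachable
  exact hc.exists_hd (((h.nodeInv hw hWF hpv hL).history g hg).mem_dom _ hu)

theorem work_mono {s s' : St F} (h : posMO s ⊆ posMO s') : Work t s p ⊆ Work t s' p := by
  rintro x ⟨q, rfl, hdom, r, hr, hqr⟩
  exact ⟨q, rfl, hdom, r, h hr, hqr⟩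

theorem finite_work : (Work t s p).Finite :=
  (finite_dom t).subset fun _ ⟨_, _, hdom, _⟩ => hdom

theorem work_liftSt_subset (hK : ∀ g ∈ K, HistoryInv pats t p g)
    (hgcp : IsGcp (posMA K) g₀) : Work t (liftSt g₀ K) (p ++ g₀) ⊆ Work t K p := by
  rintro x ⟨q, rfl, hdom, r, hr, w, rfl⟩
  exact ⟨g₀ ++ (r ++ w), by simp, hdom, g₀ ++ r,
    append_mem_posMO_of_mem_posMO_liftSt hK hgcp hr, w, by simp⟩

theorem work_derivS_subset {lab : Pos} (hAC : IsAntichain (· <+: ·) (posMO s))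
    (hlab : lab ∈ posMO s) :
    Work t (derivS pats ar s lab f) p ⊆ Work t s p \ {p ++ lab} := by
  rintro x ⟨q, rfl, hdom, r, hr, hqr⟩
  rw [below_iff_isPrefix] at hqr
  rcases posMO_derivS hr with ⟨hrs, hne⟩ | ⟨i, -, rfl⟩
  · refine ⟨⟨q, rfl, hdom, r, hrs, below_iff_isPrefix.mpr hqr⟩, fun hq => hne ?_⟩
    obtain rfl := List.append_cancel_left hq
    exact hAC.eq hrs hlab hqr
  · refine ⟨⟨q, rfl, hdom, lab, hlab,
      below_iff_isPrefix.mpr ((List.prefix_append _ _).trans hqr)⟩, fun hq => ?_⟩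
    obtain rfl := List.append_cancel_left hq
    simpa using hqr.length_le

theorem Node.exists_child (h : Node pats ar L t s p) (hw : WF ar t)
    (hWF : ∀ ℓ ∈ pats, WF ar ℓ) (hpv : ∀ ℓ ∈ pats, ℓ ≠ Tm.var)
    (hL : RootLabel pats ar L)
    (hv : subtermAt t (p ++ L s) = some v) (hf : hd v = some f)
    (hg : g ∈ derivS pats ar s (L s) f) :
    ∃ g₀ s', Node pats ar L t s' (p ++ g₀) ∧ liftGoal g₀ g ∈ s' ∧ g₀ <+: g.2.2 ∧
      (∀ x ∈ g.1, g₀ <+: x.2) ∧ (Work t s' (p ++ g₀)).ncard < (Work t s p).ncard := by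
  have hI := h.nodeInv hw hWF hpv hL
  have hlab := hL.label_mem_posMO h.reachable
  set X := derivS pats ar s (L s) f
  set K : St F :=
    {g' | g' ∈ X ∧ Relation.ReflTransGen (fun a b => a ∈ X ∧ b ∈ X ∧ dirDep a b) g g'}
  have hK : IsClass X K := ⟨g, hg, rfl⟩
  have hgK : g ∈ K := ⟨hg, .refl⟩
  obtain ⟨g₀, hgcp⟩ := exists_isGcp (⟨g.2.2, g.1, g.2.1, hgK⟩ : (posMA K).Nonempty)
  have hKh : ∀ g' ∈ K, HistoryInv pats t p g' := fun g' hg' =>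
    historyInv_derivS hw hWF hpv hI.history hv hf g' (hK.subset hg')
  have hpre := hgcp.prefix_of_mem hgK
  have hwork : Work t (liftSt g₀ K) (p ++ g₀) ⊆ Work t s p \ {p ++ L s} :=
    ((work_liftSt_subset hKh hgcp).trans (work_mono (posMO_mono hK.subset))).trans
      (work_derivS_subset hI.antichain hlab)
  have hlab_mem : p ++ L s ∈ Work t s p :=
    ⟨L s, rfl, mem_dom_of_subtermAt_eq_some hv, L s, hlab, ⟨[], by simp⟩⟩
  have hδ : (liftSt g₀ K, g₀) ∈ delta pats ar L s f := ⟨K, hK, hgcp, rfl⟩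
  refine ⟨g₀, _, h.step s p f _ g₀ ⟨v, hv, hf⟩ hδ, ⟨g, hgK, rfl⟩, hpre,
    fun x hx => (hKh g hgK).prefix_of_mem hpre hx, Set.ncard_lt_ncard ?_ finite_work⟩
  exact (Set.ssubset_iff_of_subset (hwork.trans Set.sdiff_subset)).mpr
    ⟨_, hlab_mem, fun hx => (hwork hx).2 rfl⟩

end Nodes

section Tracking

variable {pats : Set (Tm F)} {ar : F → ℕ} {L : St F → Pos} {t v : Tm F} {f : F}
  {p q ρ lab : Pos} {mo : Obl F} {ma : Tm F × Pos} {ℓ : Tm F} {s : St F}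

theorem Node.exists_label_eq (h : Node pats ar L t s p) (hc : Closed t) (hw : WF ar t)
    (hWF : ∀ ℓ ∈ pats, WF ar ℓ) (hpv : ∀ ℓ ∈ pats, ℓ ≠ Tm.var)
    (hL : RootLabel pats ar L) (hρ : ρ ∈ posMO s) :
    ∃ s₁ p₁, Node pats ar L t s₁ p₁ ∧ p₁ ++ L s₁ = p ++ ρ := by
  induction hW : (Work t s p).ncard using Nat.strong_induction_on generalizing s p ρ with
  | _ n ih =>
  by_cases hρlab : ρ = L s
  · exact ⟨s, p, h, by rw [hρlab]⟩
  obtain ⟨v, f, hv, hf⟩ := h.exists_label_symbol hc hw hWF hpv hL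
  have hI := h.nodeInv hw hWF hpv hL
  obtain ⟨ℓ, hℓ⟩ := hI.pats_nonempty hρ
  have hfresh : freshGoal ℓ ρ ∈ derivS pats ar s (L s) f :=
    Or.inl (Or.inl ⟨hI.fresh ρ hρ ℓ hℓ, by simpa [posOf_singleton] using Ne.symm hρlab⟩)
  obtain ⟨g₀, s', hn', hmem, hpre, -, hlt⟩ := h.exists_child hw hWF hpv hL hv hf hfresh
  rw [liftGoal_freshGoal] at hmem
  obtain ⟨s₁, p₁, hn₁, heq⟩ := ih _ (hW ▸ hlt) hn' ⟨_, hmem, ℓ, rfl⟩ rfl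
  exact ⟨s₁, p₁, hn₁, by rw [heq, List.append_assoc, append_drop_of_prefix hpre]⟩

theorem HistoryInv.output_or_mem_derivS (h : HistoryInv pats t p (mo, ma))
    (hWF : ∀ ℓ ∈ pats, WF ar ℓ) (hg : (mo, ma) ∈ s)
    (hv : subtermAt t (p ++ lab) = some v) (hf : hd v = some f) (hmo : Fulfilled t p mo) :
    ({(Tm.app f (List.replicate (ar f) Tm.var), lab)}, ma) ∈ s ∨
      ∃ mo', (mo', ma) ∈ derivS pats ar s lab f ∧ Fulfilled t p mo' := by
  by_cases hlab : lab ∈ posOf mo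
  · obtain ⟨u₀, hu₀⟩ := hlab
    have hu₀f : hd u₀ = some f := by
      obtain ⟨v', hv', hhd⟩ := (hmo _ hu₀).root (h.ne_var _ hu₀)
      rw [← hhd, ← hf, Option.some.inj (hv'.symm.trans hv)]
    by_cases hred : _root_.reduce mo (ar f) lab = ∅
    · left
      rwa [← h.eq_singleton_of_reduce_eq_empty hWF hu₀ hu₀f hred]
    · exact Or.inr ⟨_, Or.inl (Or.inr ⟨mo, ma, hg, ⟨u₀, hu₀, hu₀f⟩, hred, rfl⟩),
        hmo.reduce _ _⟩
  · exact Or.inr ⟨mo, Or.inl (Or.inl ⟨hg, hlab⟩), hmo⟩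

theorem Node.exists_output (h : Node pats ar L t s p) (hc : Closed t) (hw : WF ar t)
    (hWF : ∀ ℓ ∈ pats, WF ar ℓ) (hpv : ∀ ℓ ∈ pats, ℓ ≠ Tm.var)
    (hL : RootLabel pats ar L) (hg : (mo, (ℓ, q)) ∈ s) (hmo : Fulfilled t p mo) :
    ∃ s₁ p₁ f v q₁, Node pats ar L t s₁ p₁ ∧ subtermAt t (p₁ ++ L s₁) = some v ∧
      hd v = some f ∧ (ℓ, q₁) ∈ outS ar L s₁ f ∧ p ++ q = p₁ ++ q₁ := by
  induction hW : (Work t s p).ncard using Nat.strong_induction_on generalizing s p mo q with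
  | _ n ih =>
  obtain ⟨v, f, hv, hf⟩ := h.exists_label_symbol hc hw hWF hpv hL
  rcases ((h.nodeInv hw hWF hpv hL).history _ hg).output_or_mem_derivS hWF hg hv hf hmo with
    hout | ⟨mo', hmem, hmo'⟩
  · exact ⟨s, p, f, v, q, h, hv, hf, hout, rfl⟩
  obtain ⟨g₀, s', hn', hlift, hpre, hpre', hlt⟩ := h.exists_child hw hWF hpv hL hv hf hmem
  obtain ⟨s₁, p₁, f₁, v₁, q₁, hn₁, hv₁, hf₁, hout, heq⟩ :=
    ih _ (hW ▸ hlt) hn' hlift ((fulfilled_liftGoal_iff hpre').mpr hmo') rfl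
  refine ⟨s₁, p₁, f₁, v₁, q₁, hn₁, hv₁, hf₁, hout, ?_⟩
  rw [← heq, List.append_assoc]
  exact congrArg (p ++ ·) (append_drop_of_prefix hpre).symm

theorem Node.matches_of_mem_outS (h : Node pats ar L t s p) (hw : WF ar t)
    (hWF : ∀ ℓ ∈ pats, WF ar ℓ) (hpv : ∀ ℓ ∈ pats, ℓ ≠ Tm.var)
    (hL : RootLabel pats ar L)
    (hv : subtermAt t (p ++ L s) = some v) (hf : hd v = some f)
    (hout : (ℓ, q) ∈ outS ar L s f) :
    ℓ ∈ pats ∧ p ++ q ∈ Dom t ∧ Matches ℓ t (p ++ q) := by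
  have hI := (h.nodeInv hw hWF hpv hL).history _ hout
  have hm : Matches ℓ t (p ++ q) := hI.matches_of_fulfilled <| by
    rintro _ rfl
    exact matches_app hv hf fun i c hc hcv =>
      absurd (List.eq_of_mem_replicate (List.mem_of_getElem? hc)) hcv
  exact ⟨hI.pattern_mem, hm.mem_dom (hpv ℓ hI.pattern_mem), hm⟩

theorem exists_node_mem_posMO (hc : Closed t) (hw : WF ar t) (hWF : ∀ ℓ ∈ pats, WF ar ℓ)
    (hpv : ∀ ℓ ∈ pats, ℓ ≠ Tm.var) (hL : RootLabel pats ar L) {r : Pos}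
    (hr : r ∈ Dom t) :
    ∃ s p ρ, Node pats ar L t s p ∧ ρ ∈ posMO s ∧ p ++ ρ = r := by
  induction r using List.reverseRecOn with
  | nil =>
    obtain ⟨mo, ℓ, hroot, hlab⟩ := hL _ .init
    have hρ : L (initSt pats) ∈ posMO (initSt pats) := ⟨_, hroot, hlab⟩
    exact ⟨_, [], _, .root, hρ, posMO_initSt_subset hρ⟩
  | append_singleton r₀ i ih =>
    obtain ⟨s, p, ρ, hn, hρ, rfl⟩ := ih (mem_dom_of_append_mem_dom hr)
    obtain ⟨s₁, p₁, hn₁, heq⟩ := hn.exists_label_eq hc hw hWF hpv hL hρ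
    obtain ⟨v, f, hv, hf⟩ := hn₁.exists_label_symbol hc hw hWF hpv hL
    have hi : (i : ℕ) ≤ ar f := (hw.append_singleton_mem_dom_iff hv hf).mp (by rwa [heq])
    obtain ⟨ℓ, hℓ⟩ := (hn.nodeInv hw hWF hpv hL).pats_nonempty hρ
    have hfresh : freshGoal ℓ (L s₁ ++ [i]) ∈ derivS pats ar s₁ (L s₁) f :=
      Or.inr ⟨ℓ, i, hℓ, hi, rfl⟩
    obtain ⟨g₀, s', hn', hmem, hpre, -, -⟩ := hn₁.exists_child hw hWF hpv hL hv hf hfresh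
    rw [liftGoal_freshGoal] at hmem
    refine ⟨s', p₁ ++ g₀, _, hn', ⟨_, hmem, ℓ, rfl⟩, ?_⟩
    rw [List.append_assoc, append_drop_of_prefix hpre, ← List.append_assoc, heq]

end Tracking

theorem evaluation_correct_general {F : Type} (pats : Set (Tm F))
    (ar : F → ℕ) (L : St F → Pos) (t : Tm F) (hc : Closed t) (hw : WF ar t)
    (hWF : ∀ ℓ ∈ pats, WF ar ℓ)
    (hpv : ∀ ℓ ∈ pats, ℓ ≠ Tm.var) (hL : RootLabel pats ar L) :
    {x : Tm F × Pos | ∃ (s : St F) (p : Pos) (f : F) (v : Tm F) (q : Pos),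
        Node pats ar L t s p ∧ subtermAt t (p ++ L s) = some v ∧
        hd v = some f ∧ (x.1, q) ∈ outS ar L s f ∧ x.2 = p ++ q} =
    {x : Tm F × Pos | x.1 ∈ pats ∧ x.2 ∈ Dom t ∧ Matches x.1 t x.2} := by
  ext ⟨ℓ, r⟩
  constructor
  · rintro ⟨s, p, f, v, q, hn, hv, hf, hout, rfl⟩
    exact hn.matches_of_mem_outS hw hWF hpv hL hv hf hout
  · rintro ⟨hℓ, hr, hm⟩
    obtain ⟨s, p, ρ, hn, hρ, rfl⟩ := exists_node_mem_posMO hc hw hWF hpv hL hr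
    have hfresh := (hn.nodeInv hw hWF hpv hL).fresh ρ hρ ℓ hℓ
    exact hn.exists_output hc hw hWF hpv hL hfresh (by rintro _ rfl; exact hm)

/-- Correctness of set-automaton evaluation: the outputs collected over all
nodes of the evaluation tree of a closed term `t` are exactly the pairs
`ℓ@p` such that the pattern `ℓ ∈ L` matches `t` at position `p ∈ D(t)`. -/
theorem evaluation_correct {F : Type} (pats : Set (Tm F))
    (ar : F → ℕ) (L : St F → Pos) (t : Tm F) (hc : Closed t) (hw : WF ar t)
    (hpats : pats.Nonempty) (hWF : ∀ ℓ ∈ pats, WF ar ℓ)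
    (hpv : ∀ ℓ ∈ pats, ℓ ≠ Tm.var) (hL : RootLabel pats ar L) :
    {x : Tm F × Pos | ∃ (s : St F) (p : Pos) (f : F) (v : Tm F) (q : Pos),
        Node pats ar L t s p ∧ subtermAt t (p ++ L s) = some v ∧
        hd v = some f ∧ (x.1, q) ∈ outS ar L s f ∧ x.2 = p ++ q} =
    {x : Tm F × Pos | x.1 ∈ pats ∧ x.2 ∈ Dom t ∧ Matches x.1 t x.2} :=
  evaluation_correct_general pats ar L t hc hw hWF hpv hL
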